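/- arXiv:0805.2547 — 6 statements merged into one kernel-verified Lean document; each statement's English description precedes it below -/
import Mathlib

section
/- Let (g_n), (α_n), (β_n), (γ_n), (h_n) be sequences of nonnegative reals with h_n > 0 and 0 < h_n·γ_n < 1 for all n, satisfying g_{n+1} ≤ g_n(1 - h_n·γ_n) + α_n·h_n·g_n² + h_n·β_n for all n ≥ 0. Suppose there exists a positive monotonically nondecreasing sequence (μ_n) such that g_0 ≤ 1/μ_0, α_n ≤ (μ_n/2)·(γ_n - (μ_{n+1} - μ_n)/(μ_n·h_n)), and β_n ≤ (1/(2μ_n))·(γ_n - (μ_{n+1} - μ_n)/(μ_n·h_n)) for all n. Then g_n ≤ 1/μ_n for all n ≥ 0. -/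
theorem stmt_0 (g α β γ h μ : ℕ → ℝ)
    (hg : ∀ n, 0 ≤ g n) (hα : ∀ n, 0 ≤ α n) (hβ : ∀ n, 0 ≤ β n) (hγ : ∀ n, 0 ≤ γ n)
    (hh : ∀ n, 0 < h n) (hhγ : ∀ n, 0 < h n * γ n ∧ h n * γ n < 1)
    (hrec : ∀ n, g (n + 1) ≤ g n * (1 - h n * γ n) + α n * h n * (g n) ^ 2 + h n * β n)
    (hμpos : ∀ n, 0 < μ n) (hμmono : ∀ n, μ n ≤ μ (n + 1))
    (h0 : g 0 ≤ 1 / μ 0)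
    (hαc : ∀ n, α n ≤ (μ n / 2) * (γ n - (μ (n + 1) - μ n) / (μ n * h n)))
    (hβc : ∀ n, β n ≤ (1 / (2 * μ n)) * (γ n - (μ (n + 1) - μ n) / (μ n * h n))) :
    ∀ n, g n ≤ 1 / μ n := by
  intro n
  induction n with
  | zero => exact h0
  | succ n ih =>
    have hmpos : 0 < μ n := hμpos n
    have hm'pos : 0 < μ (n + 1) := hμpos (n + 1)
    have hmono : μ n ≤ μ (n + 1) := hμmono n
    have hhn : 0 < h n := hh n
    have hγ1 : h n * γ n < 1 := (hhγ n).2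
    have hαn := hαc n
    have hβn := hβc n
    set d : ℝ := γ n - (μ (n + 1) - μ n) / (μ n * h n) with hd
    have hdpos : 0 ≤ d := by
      have h1 : 0 ≤ μ n / 2 * d := le_trans (hα n) hαn
      have h2 : d = (μ n / 2 * d) * (2 / μ n) := by
        field_simp
      rw [h2]
      exact mul_nonneg h1 (by positivity)
    have hg2 : g n ^ 2 ≤ (1 / μ n) ^ 2 := by
      have := hg n
      nlinarith
    have step1 : g (n + 1) ≤ (1 / μ n) * (1 - h n * γ n) + (μ n / 2 * d) * h n * (1 / μ n) ^ 2
        + h n * (1 / (2 * μ n) * d) := by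
      have h1 : g n * (1 - h n * γ n) ≤ (1 / μ n) * (1 - h n * γ n) := by
        nlinarith [ih]
      have h2 : α n * h n * g n ^ 2 ≤ (μ n / 2 * d) * h n * (1 / μ n) ^ 2 := by
        calc α n * h n * g n ^ 2 ≤ α n * h n * (1 / μ n) ^ 2 := by
              exact mul_le_mul_of_nonneg_left hg2 (mul_nonneg (hα n) hhn.le)
          _ ≤ (μ n / 2 * d) * h n * (1 / μ n) ^ 2 := by
              have : α n * h n ≤ (μ n / 2 * d) * h n :=
                mul_le_mul_of_nonneg_right hαn hhn.le
              exact mul_le_mul_of_nonneg_right this (by positivity)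
      have h3 : h n * β n ≤ h n * (1 / (2 * μ n) * d) :=
        mul_le_mul_of_nonneg_left hβn hhn.le
      linarith [hrec n]
    have step2 : (1 / μ n) * (1 - h n * γ n) + (μ n / 2 * d) * h n * (1 / μ n) ^ 2
        + h n * (1 / (2 * μ n) * d) = (1 / μ n) * (1 - (μ (n + 1) - μ n) / μ n) := by
      rw [hd]
      have hne : (μ n : ℝ) ≠ 0 := ne_of_gt hmpos
      have hhne : h n ≠ 0 := ne_of_gt hhn
      field_simp
      ring
    have step3 : (1 / μ n) * (1 - (μ (n + 1) - μ n) / μ n) ≤ 1 / μ (n + 1) := by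
      have key : (1 / μ n) * (1 - (μ (n + 1) - μ n) / μ n)
          = (2 * μ n - μ (n + 1)) / (μ n) ^ 2 := by
        field_simp
        ring
      rw [key, div_le_div_iff₀ (by positivity) hm'pos]
      nlinarith [sq_nonneg (μ n - μ (n + 1))]
    linarith [step1, step2.le]
end

section
/- Under the hypotheses of the discrete inequality theorem (g_{n+1} ≤ g_n(1 - h_n·γ_n) + α_n·h_n·g_n² + h_n·β_n with the conditions g_0 ≤ 1/μ_0, α_n ≤ (μ_n/2)(γ_n - (μ_{n+1}-μ_n)/(μ_n h_n)), β_n ≤ (1/(2μ_n))(γ_n - (μ_{n+1}-μ_n)/(μ_n h_n)), μ_n > 0 increasing), if additionally μ_n → ∞ as n → ∞, then g_n → 0 as n → ∞. -/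
/-!
The sequence `1 / μ n` dominates `g n`. The right-hand side of the recursion is monotone in
`g n ≥ 0`, and at `g n = 1 / μ n` the bounds on `α n` and `β n` make it equal
`1 / μ n - (μ (n + 1) - μ n) / μ n ^ 2`, the tangent line of the convex function `x ↦ 1 / x`
at `μ n` evaluated at `μ (n + 1)`, hence at most `1 / μ (n + 1)`. Since `μ n → ∞`, the bound
tends to `0`.
-/

lemma one_div_sub_div_sq_le_one_div {a b : ℝ} (ha : 0 < a) (hb : 0 < b) :
    1 / a - (b - a) / a ^ 2 ≤ 1 / b := by
  rw [div_sub_div _ _ ha.ne' (by positivity), div_le_div_iff₀ (by positivity) hb]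
  nlinarith [sq_nonneg (a - b)]

lemma le_one_div_of_step {g g' α β γ h μ μ' : ℝ} (hg : 0 ≤ g) (hgμ : g ≤ 1 / μ) (hα : 0 ≤ α)
    (hh : 0 < h) (hhγ : h * γ ≤ 1) (hμ : 0 < μ) (hμ' : 0 < μ')
    (hrec : g' ≤ g * (1 - h * γ) + α * h * g ^ 2 + h * β)
    (hαc : α ≤ (μ / 2) * (γ - (μ' - μ) / (μ * h)))
    (hβc : β ≤ (1 / (2 * μ)) * (γ - (μ' - μ) / (μ * h))) :
    g' ≤ 1 / μ' := by
  have hcontract : 0 ≤ 1 - h * γ := by linarith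
  calc g' ≤ g * (1 - h * γ) + α * h * g ^ 2 + h * β := hrec
    _ ≤ 1 / μ * (1 - h * γ) + α * h * (1 / μ) ^ 2 + h * β := by gcongr
    _ ≤ 1 / μ * (1 - h * γ) + (μ / 2) * (γ - (μ' - μ) / (μ * h)) * h * (1 / μ) ^ 2
          + h * ((1 / (2 * μ)) * (γ - (μ' - μ) / (μ * h))) := by gcongr
    _ = 1 / μ - (μ' - μ) / μ ^ 2 := by field_simp; ring
    _ ≤ 1 / μ' := one_div_sub_div_sq_le_one_div hμ hμ'

theorem stmt_1_general (g α β γ h μ : ℕ → ℝ)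
    (hg : ∀ n, 0 ≤ g n) (hα : ∀ n, 0 ≤ α n)
    (hh : ∀ n, 0 < h n) (hhγ : ∀ n, 0 < h n * γ n ∧ h n * γ n < 1)
    (hrec : ∀ n, g (n + 1) ≤ g n * (1 - h n * γ n) + α n * h n * (g n) ^ 2 + h n * β n)
    (hμpos : ∀ n, 0 < μ n)
    (h0 : g 0 ≤ 1 / μ 0)
    (hαc : ∀ n, α n ≤ (μ n / 2) * (γ n - (μ (n + 1) - μ n) / (μ n * h n)))
    (hβc : ∀ n, β n ≤ (1 / (2 * μ n)) * (γ n - (μ (n + 1) - μ n) / (μ n * h n)))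
    (hμtop : Filter.Tendsto μ Filter.atTop Filter.atTop) :
    Filter.Tendsto g Filter.atTop (nhds 0) := by
  have hbound : ∀ n, g n ≤ 1 / μ n := by
    intro n
    induction n with
    | zero => exact h0
    | succ n ih =>
      exact le_one_div_of_step (hg n) ih (hα n) (hh n) (hhγ n).2.le (hμpos n) (hμpos (n + 1))
        (hrec n) (hαc n) (hβc n)
  exact squeeze_zero hg hbound (by simpa [Function.comp_def] using tendsto_inv_atTop_zero.comp hμtop)

theorem stmt_1 (g α β γ h μ : ℕ → ℝ)
    (hg : ∀ n, 0 ≤ g n) (hα : ∀ n, 0 ≤ α n) (hβ : ∀ n, 0 ≤ β n) (hγ : ∀ n, 0 ≤ γ n)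
    (hh : ∀ n, 0 < h n) (hhγ : ∀ n, 0 < h n * γ n ∧ h n * γ n < 1)
    (hrec : ∀ n, g (n + 1) ≤ g n * (1 - h n * γ n) + α n * h n * (g n) ^ 2 + h n * β n)
    (hμpos : ∀ n, 0 < μ n) (hμmono : ∀ n, μ n ≤ μ (n + 1))
    (h0 : g 0 ≤ 1 / μ 0)
    (hαc : ∀ n, α n ≤ (μ n / 2) * (γ n - (μ (n + 1) - μ n) / (μ n * h n)))
    (hβc : ∀ n, β n ≤ (1 / (2 * μ n)) * (γ n - (μ (n + 1) - μ n) / (μ n * h n)))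
    (hμtop : Filter.Tendsto μ Filter.atTop Filter.atTop) :
    Filter.Tendsto g Filter.atTop (nhds 0) :=
  stmt_1_general g α β γ h μ hg hα hh hhγ hrec hμpos h0 hαc hβc hμtop
end

section
/- Let (g_n), (α_n), (β_n), (γ_n) be nonnegative real sequences with 0 < γ_n < 1, satisfying g_{n+1} ≤ g_n(1 - γ_n) + α_n·g_n² + β_n for all n. If there exists a positive nondecreasing sequence (μ_n) with g_0 ≤ 1/μ_0, α_n ≤ (μ_n/2)(γ_n - (μ_{n+1} - μ_n)/μ_n), and β_n ≤ (1/(2μ_n))(γ_n - (μ_{n+1} - μ_n)/μ_n) for all n, then g_n ≤ 1/μ_n for all n ≥ 0. -/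
theorem stmt_2 (g α β γ μ : ℕ → ℝ)
    (hg : ∀ n, 0 ≤ g n) (hα : ∀ n, 0 ≤ α n) (hβ : ∀ n, 0 ≤ β n)
    (hγ : ∀ n, 0 < γ n ∧ γ n < 1)
    (hrec : ∀ n, g (n + 1) ≤ g n * (1 - γ n) + α n * (g n) ^ 2 + β n)
    (hμpos : ∀ n, 0 < μ n) (hμmono : ∀ n, μ n ≤ μ (n + 1))
    (h0 : g 0 ≤ 1 / μ 0)
    (hαc : ∀ n, α n ≤ (μ n / 2) * (γ n - (μ (n + 1) - μ n) / μ n))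
    (hβc : ∀ n, β n ≤ (1 / (2 * μ n)) * (γ n - (μ (n + 1) - μ n) / μ n)) :
    ∀ n, g n ≤ 1 / μ n := by
  intro n
  induction n with
  | zero => exact h0
  | succ n ih =>
    have hμn := hμpos n
    have hμn1 := hμpos (n + 1)
    have hmono := hμmono n
    have hγ1 := (hγ n).1
    have hγ2 := (hγ n).2
    have hgn := hg n
    have hαn := hα n
    have hβn := hβ n
    have hrecn := hrec n
    have h1 : g n * μ n ≤ 1 := by
      have := (le_div_iff₀ hμn).mp ih
      linarith
    -- E = γ μ - (μ' - μ), the key slack quantity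
    have hA' : α n ≤ (γ n * μ n - (μ (n + 1) - μ n)) / 2 := by
      have heq : (μ n / 2) * (γ n - (μ (n + 1) - μ n) / μ n)
          = (γ n * μ n - (μ (n + 1) - μ n)) / 2 := by
        field_simp
      linarith [hαc n, heq ▸ hαc n]
    have hB' : β n * μ n ^ 2 ≤ (γ n * μ n - (μ (n + 1) - μ n)) / 2 := by
      have heq : (1 / (2 * μ n)) * (γ n - (μ (n + 1) - μ n) / μ n) * μ n ^ 2
          = (γ n * μ n - (μ (n + 1) - μ n)) / 2 := by
        field_simp
      have := mul_le_mul_of_nonneg_right (hβc n) (sq_nonneg (μ n))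
      linarith [heq ▸ this]
    have hEnn : 0 ≤ γ n * μ n - (μ (n + 1) - μ n) := by linarith
    have hsq : g n ^ 2 * μ n ^ 2 ≤ 1 := by
      nlinarith [mul_le_mul h1 h1 (mul_nonneg hgn hμn.le) zero_le_one]
    have e1 : α n * (g n ^ 2 * μ n ^ 2) ≤ (γ n * μ n - (μ (n + 1) - μ n)) / 2 := by
      have := mul_le_mul hA' hsq (mul_nonneg (sq_nonneg _) (sq_nonneg _))
        (by linarith)
      linarith
    have e5 : g n * (1 - γ n) * μ n ^ 2 ≤ (1 - γ n) * μ n := by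
      nlinarith [mul_le_mul_of_nonneg_left h1
        (mul_nonneg (by linarith : (0:ℝ) ≤ 1 - γ n) hμn.le)]
    have P := mul_le_mul_of_nonneg_right hrecn (sq_nonneg (μ n))
    have h2 : g (n + 1) * μ n ^ 2 ≤ 2 * μ n - μ (n + 1) := by linarith
    rw [le_div_iff₀ hμn1]
    have h3 : g (n + 1) * μ (n + 1) * μ n ^ 2 ≤ μ n ^ 2 := by
      nlinarith [mul_le_mul_of_nonneg_right h2 hμn1.le, sq_nonneg (μ n - μ (n + 1))]
    exact le_of_mul_le_mul_right (by linarith) (pow_pos hμn 2)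
end

section
/- Let g, μ, h, γ, α, β be positive reals with 0 < h·γ < 1, g ≤ 1/μ, μ' ≥ μ > 0, α ≤ (μ/2)·(γ − (μ' − μ)/(μ·h)), and β ≤ (1/(2μ))·(γ − (μ' − μ)/(μ·h)). Then g(1 − hγ) + α·h·g² + h·β ≤ 1/μ'. -/
theorem stmt_4 (g μ μ' h γ α β : ℝ)
    (hg : 0 ≤ g) (hμ : 0 < μ) (hμ' : μ ≤ μ') (hh : 0 < h)
    (hγ : 0 ≤ γ) (hα : 0 ≤ α) (hβ : 0 ≤ β)
    (hhγ : 0 < h * γ) (hhγ1 : h * γ < 1)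
    (hgμ : g ≤ 1 / μ)
    (hαc : α ≤ (μ / 2) * (γ - (μ' - μ) / (μ * h)))
    (hβc : β ≤ (1 / (2 * μ)) * (γ - (μ' - μ) / (μ * h))) :
    g * (1 - h * γ) + α * h * g ^ 2 + h * β ≤ 1 / μ' := by
  have hμ'0 : 0 < μ' := lt_of_lt_of_le hμ hμ'
  have hμh : (0:ℝ) < μ * h := by positivity
  obtain ⟨d, hdef⟩ : ∃ d : ℝ, (μ' - μ) / (μ * h) = d := ⟨_, rfl⟩
  rw [hdef] at hαc hβc
  have hd : d * (μ * h) = μ' - μ := by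
    rw [← hdef]; exact div_mul_cancel₀ _ (ne_of_gt hμh)
  have hc : 0 ≤ γ - d := by nlinarith
  have h1 : g * μ ≤ 1 := by
    rw [le_div_iff₀ hμ] at hgμ; linarith
  have hg2 : μ * g ^ 2 ≤ g := by nlinarith
  have s1 : α * h * g ^ 2 ≤ (γ - d) * h * g / 2 := by
    nlinarith [mul_le_mul_of_nonneg_right hαc (by positivity : (0:ℝ) ≤ h * g ^ 2),
      mul_nonneg (mul_nonneg hc hh.le) (sub_nonneg.mpr hg2)]
  have e2 : 1 / (2 * μ) * (2 * μ) = 1 := by field_simp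
  have hβ2 : 2 * μ * β ≤ γ - d := by
    nlinarith [mul_le_mul_of_nonneg_right hβc (by positivity : (0:ℝ) ≤ 2 * μ)]
  have s2 : h * β ≤ (γ - d) * h / (2 * μ) := by
    rw [le_div_iff₀ (by positivity)]
    nlinarith
  have s3 : g * (1 - h * γ) ≤ (1 - h * γ) / μ := by
    rw [le_div_iff₀ hμ]; nlinarith
  have s4 : (γ - d) * h * g / 2 ≤ (γ - d) * h / (2 * μ) := by
    rw [div_le_div_iff₀ (by norm_num) (by positivity)]
    nlinarith [mul_nonneg hc hh.le]
  have e5 : (1 - h * γ) / μ + (γ - d) * h / (2 * μ) + (γ - d) * h / (2 * μ) = (1 - h * d) / μ := by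
    field_simp; ring
  have hdμ' : d * (μ * h) * μ' = (μ' - μ) * μ' := by rw [hd]
  have s5 : (1 - h * d) / μ ≤ 1 / μ' := by
    rw [div_le_div_iff₀ hμ hμ'0]
    apply le_of_mul_le_mul_right _ hμ
    have key : (1 - h * d) * μ' * μ = μ' * μ - (μ' - μ) * μ' := by
      rw [← hdμ']; ring
    rw [key]
    linarith [sq_nonneg (μ' - μ)]
  linarith
end

section
/- Let (g_n) be a nonnegative real sequence, c_1 > 0, ‖y‖ ≥ 0, and (a_n) a positive sequence with a_n = 4a_0/(4+n), satisfying g_{n+1} ≤ (1/2)·g_n + (c_1/a_n)·g_n² + ((a_n − a_{n+1})/a_{n+1})·‖y‖ for all n ≥ 0. If g_0 ≤ a_0/(8c_1) and a_0 ≥ 16·c_1·‖y‖, then g_n ≤ a_n/(8c_1) for all n ≥ 0, and consequently g_n → 0 as n → ∞. -/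
theorem stmt_12 (g a : ℕ → ℝ) (c1 ny a0 : ℝ)
    (hg : ∀ n, 0 ≤ g n) (hc1 : 0 < c1) (hny : 0 ≤ ny) (ha0 : 0 < a0)
    (ha : ∀ n, a n = 4 * a0 / (4 + n))
    (hrec : ∀ n, g (n + 1) ≤ (1 / 2) * g n + (c1 / a n) * (g n) ^ 2 +
      ((a n - a (n + 1)) / a (n + 1)) * ny)
    (hg0 : g 0 ≤ a0 / (8 * c1)) (ha0y : a0 ≥ 16 * c1 * ny) :
    (∀ n, g n ≤ a n / (8 * c1)) ∧ Filter.Tendsto g Filter.atTop (nhds 0) := by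
  have key : ∀ n, g n ≤ a n / (8 * c1) := by
    intro n
    induction n with
    | zero =>
      rw [ha 0]
      norm_num
      exact hg0
    | succ n ih =>
      have hx : (0:ℝ) ≤ (n:ℝ) := Nat.cast_nonneg n
      have h4 : (0:ℝ) < 4 + (n:ℝ) := by positivity
      have h5 : (0:ℝ) < 5 + (n:ℝ) := by positivity
      have han : a n = 4 * a0 / (4 + (n:ℝ)) := ha n
      have han1 : a (n + 1) = 4 * a0 / (5 + (n:ℝ)) := by
        rw [ha (n+1)]; push_cast; ring_nf
      have hrecn := hrec n
      rw [han, han1] at hrecn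
      rw [han] at ih
      rw [han1]
      have hgn := hg n
      -- bound the quadratic term
      have hq : (c1 / (4 * a0 / (4 + (n:ℝ)))) * (g n) ^ 2 ≤ (1/8) * g n := by
        have h1 : c1 / (4 * a0 / (4 + (n:ℝ))) * g n ≤ 1/8 := by
          calc c1 / (4 * a0 / (4 + (n:ℝ))) * g n
              ≤ c1 / (4 * a0 / (4 + (n:ℝ))) * (4 * a0 / (4 + (n:ℝ)) / (8 * c1)) :=
                mul_le_mul_of_nonneg_left ih (by positivity)
            _ = 1/8 := by field_simp
        calc (c1 / (4 * a0 / (4 + (n:ℝ)))) * (g n) ^ 2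
            = (c1 / (4 * a0 / (4 + (n:ℝ))) * g n) * g n := by ring
          _ ≤ (1/8) * g n := by
              apply mul_le_mul_of_nonneg_right h1 hgn
      -- bound the last term
      have hr : (4 * a0 / (4 + (n:ℝ)) - 4 * a0 / (5 + (n:ℝ))) / (4 * a0 / (5 + (n:ℝ))) * ny
          ≤ 4 * a0 / (4 + (n:ℝ)) / (64 * c1) := by
        have heq : (4 * a0 / (4 + (n:ℝ)) - 4 * a0 / (5 + (n:ℝ))) / (4 * a0 / (5 + (n:ℝ)))
            = 1 / (4 + (n:ℝ)) := by
          field_simp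
          ring
        rw [heq, div_mul_eq_mul_div, div_le_div_iff₀ (by positivity) (by positivity),
          div_mul_cancel₀ _ (ne_of_gt h4)]
        nlinarith
      have hih : (1/2) * g n ≤ (1/2) * (4 * a0 / (4 + (n:ℝ)) / (8 * c1)) := by linarith
      have hstep : g (n + 1) ≤ (5/8) * (4 * a0 / (4 + (n:ℝ)) / (8 * c1))
          + 4 * a0 / (4 + (n:ℝ)) / (64 * c1) := by
        nlinarith
      have hfin : (5/8) * (4 * a0 / (4 + (n:ℝ)) / (8 * c1))
          + 4 * a0 / (4 + (n:ℝ)) / (64 * c1) ≤ 4 * a0 / (5 + (n:ℝ)) / (8 * c1) := by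
        have key2 : 4 * a0 / (5 + (n:ℝ)) / (8 * c1)
            - ((5/8) * (4 * a0 / (4 + (n:ℝ)) / (8 * c1)) + 4 * a0 / (4 + (n:ℝ)) / (64 * c1))
            = a0 * ((n:ℝ) + 1) / (8 * c1 * (4 + (n:ℝ)) * (5 + (n:ℝ))) := by
          field_simp
          ring
        have hpos : 0 ≤ a0 * ((n:ℝ) + 1) / (8 * c1 * (4 + (n:ℝ)) * (5 + (n:ℝ))) := by positivity
        linarith
      linarith
  refine ⟨key, ?_⟩
  have hlim : Filter.Tendsto (fun n : ℕ => a n / (8 * c1)) Filter.atTop (nhds 0) := by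
    have h1 : Filter.Tendsto (fun n : ℕ => (4:ℝ) + n) Filter.atTop Filter.atTop :=
      Filter.tendsto_atTop_add_const_left _ 4 tendsto_natCast_atTop_atTop
    have h2 : Filter.Tendsto (fun n : ℕ => 4 * a0 / (4 + (n:ℝ)) / (8 * c1)) Filter.atTop (nhds 0) := by
      have := Filter.Tendsto.div_atTop (f := fun _ : ℕ => 4 * a0 / (8 * c1))
        (l := Filter.atTop) tendsto_const_nhds h1
      convert this using 2 with n
      ring
    refine h2.congr ?_
    intro n
    rw [ha n]
  exact squeeze_zero hg key hlim
end

section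
/- Let μ : [t_0, ∞) → ℝ be C¹, positive, and monotonically nondecreasing with μ(t) → ∞, and let α, β, γ, g be continuous nonnegative functions on [t_0, ∞) with g differentiable, satisfying g'(t) ≤ −γ(t)g(t) + α(t)g(t)² + β(t) for t ≥ t_0. If α(t) ≤ (μ(t)/2)(γ(t) − μ'(t)/μ(t)), β(t) ≤ (1/(2μ(t)))(γ(t) − μ'(t)/μ(t)) for all t ≥ t_0, and μ(t_0)g(t_0) < 1, then 0 ≤ g(t) < 1/μ(t) for all t ≥ t_0. -/
/-!
With `c = γ - μ'/μ`, the hypotheses on `α` and `β` give `(μ g)' ≤ (c/2) (1 - μ g)²`, so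
`F = 1 - μ g` satisfies `F' ≥ -k F` with `k = (c/2) F` continuous. On each compact interval `k`
is bounded by some `M`, and comparison with the barrier `F(t₀) e^{-(M+1)(t-t₀)}` shows that `F`,
positive at `t₀`, stays positive.
-/

open Set

theorem pos_of_deriv_ge_neg_const_mul {f f' : ℝ → ℝ} {a b M : ℝ}
    (hf : ContinuousOn f (Icc a b)) (hf' : ∀ x ∈ Ico a b, HasDerivWithinAt f (f' x) (Ici x) x)
    (hfa : 0 < f a) (bound : ∀ x ∈ Ico a b, 0 < f x → -M * f x ≤ f' x) :
    ∀ x ∈ Icc a b, 0 < f x := by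
  -- The barrier decays strictly faster than `f' ≥ -M f` allows, so `f` cannot cross it.
  set barrier : ℝ → ℝ := fun x => f a * Real.exp (-(M + 1) * (x - a))
  have hbarrier : ∀ x, HasDerivAt barrier (-(M + 1) * barrier x) x := fun x => by
    have := (((hasDerivAt_id x).sub_const a).const_mul (-(M + 1))).exp.const_mul (f a)
    exact this.congr_deriv (by simp only [barrier, id]; ring)
  have hle : ∀ x ∈ Icc a b, barrier x ≤ f x :=
    image_le_of_deriv_right_lt_deriv_boundary'
      (fun x _ => (hbarrier x).continuousAt.continuousWithinAt)
      (fun x _ => (hbarrier x).hasDerivWithinAt) (by simp [barrier]) hf hf'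
      fun x hx hfx => by
        have hpos : 0 < barrier x := by positivity
        have := bound x hx (hfx ▸ hpos)
        rw [← hfx] at this
        linarith
  exact fun x hx => (show 0 < barrier x by positivity).trans_le (hle x hx)

theorem pos_of_deriv_ge_neg_mul {f f' k : ℝ → ℝ} {a : ℝ}
    (hf : ContinuousOn f (Ici a)) (hf' : ∀ x ∈ Ici a, HasDerivWithinAt f (f' x) (Ici x) x)
    (hk : ContinuousOn k (Ici a)) (hfa : 0 < f a)
    (bound : ∀ x ∈ Ici a, 0 < f x → -k x * f x ≤ f' x) :
    ∀ x ∈ Ici a, 0 < f x := by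
  intro b hb
  obtain ⟨M, hM⟩ :=
    isCompact_Icc.bddAbove_image (hk.mono (Icc_subset_Ici_self : Icc a b ⊆ Ici a))
  refine pos_of_deriv_ge_neg_const_mul (M := M) (hf.mono Icc_subset_Ici_self)
    (fun x hx => hf' x hx.1) hfa (fun x hx hfx => ?_) b ⟨hb, le_rfl⟩
  have hkM : k x ≤ M := hM ⟨x, Ico_subset_Icc_self hx, rfl⟩
  nlinarith [bound x hx.1 hfx]

theorem deriv_mul_le_half_mul_one_sub_sq {μ μ' α β γ g g' : ℝ} (hμ : 0 < μ)
    (hineq : g' ≤ -γ * g + α * g ^ 2 + β)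
    (hα : α ≤ (μ / 2) * (γ - μ' / μ)) (hβ : β ≤ (1 / (2 * μ)) * (γ - μ' / μ)) :
    μ' * g + μ * g' ≤ (γ - μ' / μ) / 2 * (1 - μ * g) ^ 2 := by
  set c := γ - μ' / μ
  have hμ' : μ' = μ * (γ - c) := by simp only [c]; field_simp; ring
  have hμβ : μ * β ≤ c / 2 := by
    calc μ * β ≤ μ * ((1 / (2 * μ)) * c) := by gcongr
      _ = c / 2 := by field_simp
  rw [hμ']
  linarith [mul_le_mul_of_nonneg_left hineq hμ.le,
    mul_le_mul_of_nonneg_left hα (by positivity : 0 ≤ μ * g ^ 2)]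

theorem stmt_15_general (t0 : ℝ) (μ α β γ g : ℝ → ℝ) (μ' g' : ℝ → ℝ)
    (hμC1 : ∀ t ∈ Set.Ici t0, HasDerivAt μ (μ' t) t)
    (hμ'cont : ContinuousOn μ' (Set.Ici t0))
    (hμpos : ∀ t ∈ Set.Ici t0, 0 < μ t)
    (hγcont : ContinuousOn γ (Set.Ici t0)) (hgcont : ContinuousOn g (Set.Ici t0))
    (hg : ∀ t ∈ Set.Ici t0, 0 ≤ g t)
    (hgderiv : ∀ t ∈ Set.Ici t0, HasDerivAt g (g' t) t)
    (hineq : ∀ t ∈ Set.Ici t0, g' t ≤ -(γ t) * g t + α t * (g t) ^ 2 + β t)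
    (hαc : ∀ t ∈ Set.Ici t0, α t ≤ (μ t / 2) * (γ t - μ' t / μ t))
    (hβc : ∀ t ∈ Set.Ici t0, β t ≤ (1 / (2 * μ t)) * (γ t - μ' t / μ t))
    (hinit : μ t0 * g t0 < 1) :
    ∀ t ∈ Set.Ici t0, 0 ≤ g t ∧ g t < 1 / μ t := by
  set F : ℝ → ℝ := fun t => 1 - μ t * g t
  have hμcont : ContinuousOn μ (Ici t0) := fun t ht =>
    (hμC1 t ht).continuousAt.continuousWithinAt
  have hFcont : ContinuousOn F (Ici t0) := continuousOn_const.sub (hμcont.mul hgcont)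
  have hF' : ∀ t ∈ Ici t0, HasDerivAt F (-(μ' t * g t + μ t * g' t)) t := fun t ht =>
    ((hμC1 t ht).mul (hgderiv t ht)).const_sub 1
  have hccont : ContinuousOn (fun t => (γ t - μ' t / μ t) / 2) (Ici t0) :=
    (hγcont.sub (hμ'cont.div hμcont fun t ht => (hμpos t ht).ne')).div_const 2
  have hFpos : ∀ t ∈ Ici t0, 0 < F t :=
    pos_of_deriv_ge_neg_mul hFcont (fun t ht => (hF' t ht).hasDerivWithinAt) (hccont.mul hFcont)
      (sub_pos.2 hinit) fun t ht _ => by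
        have := deriv_mul_le_half_mul_one_sub_sq (hμpos t ht) (hineq t ht) (hαc t ht) (hβc t ht)
        simp only [F, Pi.mul_apply] at this ⊢
        linarith
  intro t ht
  refine ⟨hg t ht, ?_⟩
  rw [lt_div_iff₀' (hμpos t ht)]
  linarith [hFpos t ht]

theorem stmt_15 (t0 : ℝ) (ht0 : 0 ≤ t0) (μ α β γ g : ℝ → ℝ) (μ' g' : ℝ → ℝ)
    (hμC1 : ∀ t ∈ Set.Ici t0, HasDerivAt μ (μ' t) t)
    (hμ'cont : ContinuousOn μ' (Set.Ici t0))
    (hμpos : ∀ t ∈ Set.Ici t0, 0 < μ t)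
    (hμmono : ∀ t ∈ Set.Ici t0, 0 ≤ μ' t)
    (hμtop : Filter.Tendsto μ Filter.atTop Filter.atTop)
    (hαcont : ContinuousOn α (Set.Ici t0)) (hβcont : ContinuousOn β (Set.Ici t0))
    (hγcont : ContinuousOn γ (Set.Ici t0)) (hgcont : ContinuousOn g (Set.Ici t0))
    (hα : ∀ t ∈ Set.Ici t0, 0 ≤ α t) (hβ : ∀ t ∈ Set.Ici t0, 0 ≤ β t)
    (hγ : ∀ t ∈ Set.Ici t0, 0 ≤ γ t) (hg : ∀ t ∈ Set.Ici t0, 0 ≤ g t)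
    (hgderiv : ∀ t ∈ Set.Ici t0, HasDerivAt g (g' t) t)
    (hineq : ∀ t ∈ Set.Ici t0, g' t ≤ -(γ t) * g t + α t * (g t) ^ 2 + β t)
    (hαc : ∀ t ∈ Set.Ici t0, α t ≤ (μ t / 2) * (γ t - μ' t / μ t))
    (hβc : ∀ t ∈ Set.Ici t0, β t ≤ (1 / (2 * μ t)) * (γ t - μ' t / μ t))
    (hinit : μ t0 * g t0 < 1) :
    ∀ t ∈ Set.Ici t0, 0 ≤ g t ∧ g t < 1 / μ t :=
  stmt_15_general t0 μ α β γ g μ' g' hμC1 hμ'cont hμpos hγcont hgcont hg hgderiv hineq hαc hβc hinit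
end
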